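/- Let N be a positive integer and K ≤ N/2, and set p := K/N. Then the partial sum of binomial coefficients satisfies ∑_{k=0}^{K} C(N,k) ≤ 2^{N·h(p)}, where h(p) = -p log₂ p - (1-p) log₂(1-p) is the binary entropy function (with h(0) := 0). -/

import Mathlib

/-!
Compare with the binomial distribution `Bin(N, p)`, `p = K / N`: its lower tail
`∑_{k ≤ K} C(N,k) p^k (1-p)^(N-k)` is at most `1`, and since `p ≤ 1 - p` every weight
`p^k (1-p)^(N-k)` with `k ≤ K` is at least `p^K (1-p)^(N-K) = 2^(-N h(p))`.
-/

/-- Binary entropy with base-2 logarithms (with `h 0 = 0` since `logb 2 0 = 0`). -/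
noncomputable def binEnt (p : ℝ) : ℝ := -p * Real.logb 2 p - (1 - p) * Real.logb 2 (1 - p)

open Finset

theorem pow_mul_pow_sub_le_pow_mul_pow_sub {R : Type*} [CommSemiring R] [PartialOrder R]
    [IsOrderedRing R] {a b : R} (ha : 0 ≤ a) (hab : a ≤ b) {k K N : ℕ} (hkK : k ≤ K)
    (hKN : K ≤ N) : a ^ K * b ^ (N - K) ≤ a ^ k * b ^ (N - k) := by
  have hK : a ^ K = a ^ k * a ^ (K - k) := by rw [← pow_add, Nat.add_sub_cancel' hkK]
  have hN : b ^ (N - k) = b ^ (N - K) * b ^ (K - k) := by rw [← pow_add]; congr 1; omega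
  rw [hK, hN, mul_right_comm, ← mul_assoc]
  exact mul_le_mul_of_nonneg_left (pow_le_pow_left₀ ha hab _)
    (mul_nonneg (pow_nonneg ha _) (pow_nonneg (ha.trans hab) _))

theorem sum_range_choose_mul_pow_le_one {p : ℝ} (hp0 : 0 ≤ p) (hp1 : p ≤ 1) {N K : ℕ}
    (hKN : K ≤ N) : ∑ k ∈ range (K + 1), (N.choose k : ℝ) * p ^ k * (1 - p) ^ (N - k) ≤ 1 := by
  have hq : 0 ≤ 1 - p := by linarith
  calc ∑ k ∈ range (K + 1), (N.choose k : ℝ) * p ^ k * (1 - p) ^ (N - k)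
      ≤ ∑ k ∈ range (N + 1), (N.choose k : ℝ) * p ^ k * (1 - p) ^ (N - k) :=
        sum_le_sum_of_subset_of_nonneg (range_subset_range.2 (by omega))
          fun k _ _ ↦ by positivity
    _ = (p + (1 - p)) ^ N := by rw [add_pow]; exact sum_congr rfl fun k _ ↦ by ring
    _ = 1 := by rw [add_sub_cancel, one_pow]

theorem sum_range_choose_mul_pow_le_one_of_le_one_sub {p : ℝ} (hp0 : 0 ≤ p) (hp : p ≤ 1 - p)
    {N K : ℕ} (hKN : K ≤ N) :
    (∑ k ∈ range (K + 1), (N.choose k : ℝ)) * (p ^ K * (1 - p) ^ (N - K)) ≤ 1 := by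
  refine le_trans ?_ (sum_range_choose_mul_pow_le_one hp0 (by linarith) hKN)
  rw [sum_mul]
  refine sum_le_sum fun k hk ↦ ?_
  rw [mul_assoc]
  exact mul_le_mul_of_nonneg_left
    (pow_mul_pow_sub_le_pow_mul_pow_sub hp0 hp (Nat.lt_succ_iff.1 (mem_range.1 hk)) hKN)
    (Nat.cast_nonneg _)

theorem two_rpow_mul_binEnt {p : ℝ} (hp0 : 0 < p) (hp1 : p < 1) (x : ℝ) :
    (2 : ℝ) ^ (x * binEnt p) = (p ^ (x * p) * (1 - p) ^ (x * (1 - p)))⁻¹ := by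
  have hq : 0 < 1 - p := by linarith
  have hpos : 0 < (p ^ (x * p) * (1 - p) ^ (x * (1 - p)))⁻¹ := by positivity
  refine (Real.logb_eq_iff_rpow_eq two_pos (by norm_num) hpos).1 ?_
  rw [Real.logb_inv, Real.logb_mul (by positivity) (by positivity),
    Real.logb_rpow_eq_mul_logb_of_pos hp0, Real.logb_rpow_eq_mul_logb_of_pos hq, binEnt]
  ring

theorem stmt2_general (N K : ℕ) (hK : (K : ℝ) ≤ (N : ℝ) / 2) :
    (∑ k ∈ Finset.range (K + 1), (N.choose k : ℝ)) ≤
      (2 : ℝ) ^ ((N : ℝ) * binEnt ((K : ℝ) / (N : ℝ))) := by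
  rcases K.eq_zero_or_pos with rfl | hKpos
  · simp [binEnt]
  have hKpos' : (0 : ℝ) < K := by exact_mod_cast hKpos
  have hNpos : (0 : ℝ) < N := by linarith
  have hKN : K ≤ N := by exact_mod_cast (show (K : ℝ) ≤ N by linarith)
  set p : ℝ := (K : ℝ) / (N : ℝ)
  have hp0 : 0 < p := div_pos hKpos' hNpos
  have hp : p ≤ 1 - p := by
    have : p ≤ 1 / 2 := by rw [div_le_div_iff₀ hNpos two_pos]; linarith
    linarith
  have hNp : (N : ℝ) * p = K := mul_div_cancel₀ _ hNpos.ne'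
  have hNq : (N : ℝ) * (1 - p) = (N - K : ℕ) := by rw [Nat.cast_sub hKN, ← hNp]; ring
  have hw : 0 < p ^ K * (1 - p) ^ (N - K) := mul_pos (pow_pos hp0 _) (pow_pos (by linarith) _)
  rw [two_rpow_mul_binEnt hp0 (by linarith), hNp, hNq, Real.rpow_natCast, Real.rpow_natCast,
    ← one_div, le_div_iff₀ hw]
  exact sum_range_choose_mul_pow_le_one_of_le_one_sub hp0.le hp hKN

theorem stmt2 (N K : ℕ) (hN : 0 < N) (hK : (K : ℝ) ≤ (N : ℝ) / 2) :
    (∑ k ∈ Finset.range (K + 1), (N.choose k : ℝ)) ≤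
      (2 : ℝ) ^ ((N : ℝ) * binEnt ((K : ℝ) / (N : ℝ))) :=
  stmt2_general N K hK
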